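/- arXiv:0906.1696 — 4 statements merged into one kernel-verified Lean document; each statement's English description precedes it below -/
import Mathlib

section
/- Let R₀ be a commutative Noetherian ring, let R = ⊕_{j≥0} R_j be a commutative graded ring which is a finitely generated graded R₀-algebra whose degree-zero part is R₀, and let I = ⊕_{j≥1} R_j be its irrelevant ideal. Let M = ⊕_{j≥0} M_j be a graded R-module generated as an R-module by a (possibly infinite) set of homogeneous elements whose degrees are bounded by some integer N. Then the I-adic filtration and the filtration by grading define the same topology on M: for every i ≥ 0 one has I^i·M ⊆ M^i, and for every n ≥ 1 there exists i₀ such that M^i ⊆ I^n·M for all i ≥ i₀, where M^i = ⊕_{j≥i} M_j. Consequently, the canonical map θ_M from the I-adic completion of M to the graded completion lim_i M/M^i is an isomorphism. -/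
set_option linter.unusedSectionVars false

open DirectSum

section

variable (R₀ : Type*) [CommRing R₀]
variable {R : Type*} [CommRing R] [Algebra R₀ R]
variable (𝒜 : ℕ → Submodule R₀ R) [GradedAlgebra 𝒜]
variable {M : Type*} [AddCommGroup M] [Module R₀ M] [Module R M] [IsScalarTower R₀ R M]
variable (ℳ : ℕ → Submodule R₀ M) [DirectSum.Decomposition ℳ] [SetLike.GradedSMul 𝒜 ℳ]

/-- The filtration of a graded module by grading: `M^i = ⊕_{j ≥ i} M_j`. -/
def gradeFilt (i : ℕ) : Submodule R₀ M :=
  ⨆ j, ⨆ _ : i ≤ j, ℳ j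

lemma mem_gradeFilt_of_mem {k i : ℕ} (h : i ≤ k) {m : M} (hm : m ∈ ℳ k) :
    m ∈ gradeFilt R₀ ℳ i :=
  (le_iSup₂_of_le k h le_rfl : ℳ k ≤ gradeFilt R₀ ℳ i) hm

lemma gradeFilt_antitone {i j : ℕ} (h : i ≤ j) :
    gradeFilt R₀ ℳ j ≤ gradeFilt R₀ ℳ i :=
  iSup₂_le fun k hk => le_iSup₂_of_le k (h.trans hk) le_rfl

lemma gradeFilt_zero_eq_top : gradeFilt R₀ ℳ 0 = ⊤ := by
  classical
  rw [eq_top_iff]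
  intro m _
  rw [← DirectSum.sum_support_decompose ℳ m]
  exact Submodule.sum_mem _ fun k _ => mem_gradeFilt_of_mem R₀ ℳ (Nat.zero_le k) (SetLike.coe_mem _)

lemma irrelevant_smul_gradeFilt {r : R} (hr : r ∈ (HomogeneousIdeal.irrelevant 𝒜).toIdeal)
    {i : ℕ} {m : M} (hm : m ∈ gradeFilt R₀ ℳ i) :
    r • m ∈ gradeFilt R₀ ℳ (i + 1) := by
  classical
  refine Submodule.iSup_induction (motive := fun m => r • m ∈ gradeFilt R₀ ℳ (i + 1)) _ hm ?_ ?_ ?_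
  · intro j x hx
    by_cases hij : i ≤ j
    · rw [iSup_pos hij] at hx
      have hsum : r • x = ∑ d ∈ (DirectSum.decompose 𝒜 r).support,
          ((DirectSum.decompose 𝒜 r d : R) • x) := by
        conv_lhs => rw [← DirectSum.sum_support_decompose 𝒜 r]
        rw [Finset.sum_smul]
      rw [hsum]
      refine Submodule.sum_mem _ fun d hd => ?_
      have hd0 : d ≠ 0 := by
        intro h0
        subst h0
        have hz : (DirectSum.decompose 𝒜 r 0 : R) = 0 := by
          have := (HomogeneousIdeal.mem_irrelevant_iff 𝒜 r).mp hr
          rwa [GradedRing.proj_apply] at this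
        exact (DFinsupp.mem_support_iff.mp hd) (by exact_mod_cast Subtype.ext hz)
      have hmem : (DirectSum.decompose 𝒜 r d : R) • x ∈ ℳ (d + j) := by
        have := SetLike.GradedSMul.smul_mem (A := 𝒜) (B := ℳ)
          (SetLike.coe_mem (DirectSum.decompose 𝒜 r d)) hx
        simpa [vadd_eq_add] using this
      exact mem_gradeFilt_of_mem R₀ ℳ (by omega) hmem
    · rw [iSup_neg hij] at hx
      simp only [Submodule.mem_bot] at hx
      subst hx
      show r • (0 : M) ∈ gradeFilt R₀ ℳ (i + 1)
      rw [smul_zero]; exact Submodule.zero_mem _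
  · show r • (0 : M) ∈ gradeFilt R₀ ℳ (i + 1)
    rw [smul_zero]; exact Submodule.zero_mem _
  · intro x y hx hy
    show r • (x + y) ∈ gradeFilt R₀ ℳ (i + 1)
    rw [smul_add]; exact Submodule.add_mem _ hx hy

lemma pow_irrelevant_smul_le_gradeFilt (i : ℕ) :
    ∀ x ∈ ((HomogeneousIdeal.irrelevant 𝒜).toIdeal ^ i • (⊤ : Submodule R M)),
      x ∈ gradeFilt R₀ ℳ i := by
  induction i with
  | zero =>
    intro x _
    rw [gradeFilt_zero_eq_top R₀ ℳ]
    exact Submodule.mem_top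
  | succ i ih =>
    intro x hx
    rw [pow_succ', mul_smul] at hx
    exact Submodule.smul_induction_on hx
      (fun r hr y hy => irrelevant_smul_gradeFilt R₀ 𝒜 ℳ hr (ih y hy))
      (fun a b ha hb => Submodule.add_mem _ ha hb)

variable (M) in
/-- The `I`-adic filtration of `M`, viewed as a filtration by `R₀`-submodules. -/
def adicFilt (I : Ideal R) (i : ℕ) : Submodule R₀ M :=
  (I ^ i • (⊤ : Submodule R M)).restrictScalars R₀

lemma adicFilt_antitone (I : Ideal R) {i j : ℕ} (h : i ≤ j) :
    adicFilt R₀ M I j ≤ adicFilt R₀ M I i := fun x hx =>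
  Submodule.smul_mono_left (Ideal.pow_le_pow_right h) hx

lemma le_comap_id_of_le {p q : Submodule R₀ M} (h : p ≤ q) :
    p ≤ q.comap (LinearMap.id : M →ₗ[R₀] M) := by
  simpa [Submodule.comap_id] using h

/-- The completion of `M` with respect to a decreasing filtration `F` by submodules,
realized as the set (inverse limit) of compatible families in `∏ i, M ⧸ F i`. -/
def filtCompletionSet (F : ℕ → Submodule R₀ M) (hF : ∀ {i j : ℕ}, i ≤ j → F j ≤ F i) :
    Set (∀ i, M ⧸ F i) :=
  {x | ∀ i j : ℕ, ∀ h : i ≤ j,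
    Submodule.mapQ (F j) (F i) LinearMap.id (le_comap_id_of_le R₀ (hF h)) (x j) = x i}

/-- The canonical map `θ_M` from the `I`-adic completion of `M` (for `I` the irrelevant
ideal) to the graded completion, induced by the containments `I^i·M ⊆ M^i`. -/
noncomputable def thetaMap :
    (∀ i, M ⧸ adicFilt R₀ M ((HomogeneousIdeal.irrelevant 𝒜).toIdeal) i) →
      ∀ i, M ⧸ gradeFilt R₀ ℳ i :=
  fun x i => Submodule.mapQ _ _ LinearMap.id
    (le_comap_id_of_le R₀ fun m hm => pow_irrelevant_smul_le_gradeFilt R₀ 𝒜 ℳ i m hm) (x i)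

end

/-!
Since `R` is Noetherian, the irrelevant ideal `I` is generated by finitely many homogeneous
elements, all of degree `< D` say. Taking degree-`j` components of `r = ∑ aₖ fₖ` then shows by
induction on `n` that every homogeneous element of degree `≥ n * D` lies in `Iⁿ`, and the same
argument applied to the generators of `M` (of degree `≤ N`) gives `M^{nD+N} ⊆ Iⁿ M`. Together
with `Iⁱ M ⊆ M^i` the two filtrations are cofinal in each other, so their inverse limits agree.
-/

section GradedRing

variable {R : Type*} [CommRing R] {σ : Type*} [SetLike σ R] [AddSubgroupClass σ R]
  (𝒜 : ℕ → σ) [GradedRing 𝒜]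

variable {M : Type*} [AddCommGroup M] [Module R M] {τ : Type*} [SetLike τ M]
  [AddSubgroupClass τ M] {ℳ : ℕ → τ} [DirectSum.Decomposition ℳ] [SetLike.GradedSMul 𝒜 ℳ]

theorem coe_decompose_smul_of_right_mem_of_le {s : M} {d j : ℕ} (hs : s ∈ ℳ d) (h : d ≤ j)
    (a : R) : (decompose ℳ (a • s) j : M) = (decompose 𝒜 a (j - d) : R) • s := by
  induction a using DirectSum.Decomposition.inductionOn 𝒜 with
  | zero => simp
  | @homogeneous e a =>
    have has : (a : R) • s ∈ ℳ (e + d) := SetLike.GradedSMul.smul_mem a.2 hs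
    rw [decompose_coe]
    by_cases he : e = j - d
    · subst he
      rw [decompose_of_mem_same ℳ (by rwa [Nat.sub_add_cancel h] at has), of_eq_same]
    · rw [decompose_of_mem_ne ℳ has (by omega), of_eq_of_ne _ _ _ (Ne.symm he),
        ZeroMemClass.coe_zero, zero_smul]
  | add a b ha hb =>
    simp only [add_smul, decompose_add, DirectSum.add_apply, AddMemClass.coe_add, ha, hb]

theorem coe_decompose_mem_smul_span {J : Ideal R} {k N : ℕ} {S : Set M}
    (hS : ∀ s ∈ S, ∃ d ≤ N, s ∈ ℳ d) (hJ : ∀ j, k ≤ j → ∀ r ∈ 𝒜 j, r ∈ J)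
    {x : M} (hx : x ∈ Submodule.span R S) {j : ℕ} (hj : k + N ≤ j) :
    (decompose ℳ x j : M) ∈ J • Submodule.span R S := by
  induction hx using Submodule.closure_induction with
  | zero => simp
  | add x y _ _ hx hy =>
    rw [decompose_add, DirectSum.add_apply, AddMemClass.coe_add]
    exact add_mem hx hy
  | smul_mem r s hsS =>
    obtain ⟨d, hdN, hsd⟩ := hS s hsS
    rw [coe_decompose_smul_of_right_mem_of_le 𝒜 hsd (by omega)]
    exact Submodule.smul_mem_smul (hJ _ (by omega) _ (SetLike.coe_mem _))
      (Submodule.subset_span hsS)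

theorem exists_grade_le_irrelevant_pow (hI : (HomogeneousIdeal.irrelevant 𝒜).toIdeal.FG) :
    ∃ D : ℕ, ∀ n j : ℕ, n * D ≤ j → ∀ r ∈ 𝒜 j,
      r ∈ (HomogeneousIdeal.irrelevant 𝒜).toIdeal ^ n := by
  rw [HomogeneousIdeal.irrelevant_eq_span] at hI
  obtain ⟨F, hF, hspan⟩ := (Submodule.fg_span_iff_fg_span_finset_subset _).mp hI
  have hIF : (HomogeneousIdeal.irrelevant 𝒜).toIdeal = Submodule.span R F :=
    (HomogeneousIdeal.irrelevant_eq_span 𝒜).trans hspan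
  have hFdeg : ∀ f ∈ F, ∃ i, f ∈ 𝒜 i := fun f hf => by
    obtain ⟨i, -, hi⟩ := Set.mem_iUnion₂.mp (hF hf)
    exact ⟨i, hi⟩
  choose! deg hdeg using hFdeg
  refine ⟨F.sup deg + 1, fun n => ?_⟩
  induction n with
  | zero => simp
  | succ n ih =>
    intro j hj r hr
    have hrF : r ∈ Submodule.span R F :=
      hIF ▸ HomogeneousIdeal.mem_irrelevant_of_mem 𝒜 (by nlinarith) hr
    have key := coe_decompose_mem_smul_span 𝒜 (ℳ := 𝒜) (N := F.sup deg + 1)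
      (fun f hf => ⟨deg f, (Finset.le_sup hf).trans (Nat.le_succ _), hdeg f hf⟩) ih hrF
      (by nlinarith : n * (F.sup deg + 1) + (F.sup deg + 1) ≤ j)
    rwa [decompose_of_mem_same 𝒜 hr, ← hIF, smul_eq_mul, ← pow_succ] at key

end GradedRing

theorem gradeFilt_le_smul_top (R₀ : Type*) [CommRing R₀] {R : Type*} [CommRing R]
    [Algebra R₀ R] (𝒜 : ℕ → Submodule R₀ R) [GradedAlgebra 𝒜] {M : Type*} [AddCommGroup M]
    [Module R₀ M] [Module R M] [IsScalarTower R₀ R M] {ℳ : ℕ → Submodule R₀ M}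
    [DirectSum.Decomposition ℳ] [SetLike.GradedSMul 𝒜 ℳ] {J : Ideal R} {k N : ℕ} {S : Set M}
    (hS : ∀ s ∈ S, ∃ d ≤ N, s ∈ ℳ d) (hSgen : Submodule.span R S = ⊤)
    (hJ : ∀ j, k ≤ j → ∀ r ∈ 𝒜 j, r ∈ J) {i : ℕ} (hi : k + N ≤ i) :
    gradeFilt R₀ ℳ i ≤ (J • ⊤ : Submodule R M).restrictScalars R₀ :=
  iSup₂_le fun j hij x hx => by
    have := coe_decompose_mem_smul_span 𝒜 hS hJ (hSgen ▸ Submodule.mem_top : x ∈ _)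
      (hi.trans hij)
    rwa [decompose_of_mem_same ℳ hx, hSgen] at this

section FiltCompletion

variable {R₀ : Type*} [CommRing R₀] {M : Type*} [AddCommGroup M] [Module R₀ M]
  {F : ℕ → Submodule R₀ M} {hF : ∀ {i j : ℕ}, i ≤ j → F j ≤ F i}

open Submodule (mapQ mapQ_apply)

theorem apply_eq_mk_of_mem_filtCompletionSet {x : ∀ i, M ⧸ F i}
    (hx : x ∈ filtCompletionSet R₀ F hF) {i j : ℕ} (hij : i ≤ j) {m : M}
    (hm : x j = Submodule.Quotient.mk m) : x i = Submodule.Quotient.mk m := by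
  rw [← hx i j hij, hm, mapQ_apply, LinearMap.id_apply]

theorem sub_mem_of_mem_filtCompletionSet {x : ∀ i, M ⧸ F i}
    (hx : x ∈ filtCompletionSet R₀ F hF) {i j : ℕ} (hij : i ≤ j) {a b : M}
    (ha : x i = Submodule.Quotient.mk a) (hb : x j = Submodule.Quotient.mk b) : a - b ∈ F i := by
  rw [← Submodule.Quotient.eq, ← ha, apply_eq_mk_of_mem_filtCompletionSet hx hij hb]

theorem bijOn_mapQ_filtCompletionSet {G : ℕ → Submodule R₀ M}
    (hG : ∀ {i j : ℕ}, i ≤ j → G j ≤ G i) (hFG : ∀ i, F i ≤ G i) (hGF : ∀ i, ∃ k, G k ≤ F i) :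
    Set.BijOn (fun x i => mapQ (F i) (G i) LinearMap.id (le_comap_id_of_le R₀ (hFG i)) (x i))
      (filtCompletionSet R₀ F hF) (filtCompletionSet R₀ G hG) := by
  have hGF' : ∀ i, ∃ k, i ≤ k ∧ G k ≤ F i := fun i =>
    let ⟨k, hk⟩ := hGF i
    ⟨max i k, le_max_left _ _, (hG (le_max_right _ _)).trans hk⟩
  choose k hik hk using hGF'
  refine ⟨fun x hx i j hij => ?_, fun x hx y hy hxy => funext fun i => ?_, fun y hy => ?_⟩
  · obtain ⟨m, hm⟩ := Submodule.Quotient.mk_surjective _ (x j)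
    dsimp only
    rw [apply_eq_mk_of_mem_filtCompletionSet hx hij hm.symm, ← hm]
    rfl
  · obtain ⟨m, hm⟩ := Submodule.Quotient.mk_surjective _ (x (k i))
    obtain ⟨m', hm'⟩ := Submodule.Quotient.mk_surjective _ (y (k i))
    have h : mapQ _ _ _ _ (x (k i)) = mapQ _ _ _ _ (y (k i)) := congrFun hxy (k i)
    rw [← hm, ← hm', mapQ_apply, mapQ_apply, Submodule.Quotient.eq] at h
    rw [apply_eq_mk_of_mem_filtCompletionSet hx (hik i) hm.symm,
      apply_eq_mk_of_mem_filtCompletionSet hy (hik i) hm'.symm, Submodule.Quotient.eq]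
    exact hk i h
  · choose m hm using fun i => Submodule.Quotient.mk_surjective (G (k i)) (y (k i))
    refine ⟨fun i => Submodule.Quotient.mk (m i), fun i j hij => ?_, funext fun i => ?_⟩
    · obtain ⟨l, hl⟩ := Submodule.Quotient.mk_surjective _ (y (max (k i) (k j)))
      have hil := sub_mem_of_mem_filtCompletionSet hy (le_max_left _ _) (hm i).symm hl.symm
      have hjl := sub_mem_of_mem_filtCompletionSet hy (le_max_right _ _) (hm j).symm hl.symm
      rw [mapQ_apply, LinearMap.id_apply, Submodule.Quotient.eq, ← sub_sub_sub_cancel_right _ _ l]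
      exact sub_mem (hF hij (hk j hjl)) (hk i hil)
    · dsimp only
      rw [mapQ_apply, apply_eq_mk_of_mem_filtCompletionSet hy (hik i) (hm i).symm]
      rfl

end FiltCompletion

theorem adic_and_grading_filtration_same_topology_and_theta_bijective_general
    (R₀ : Type*) [CommRing R₀] [IsNoetherianRing R₀]
    (R : Type*) [CommRing R] [Algebra R₀ R]
    (𝒜 : ℕ → Submodule R₀ R) [GradedAlgebra 𝒜]
    (hfg : Algebra.FiniteType R₀ R)
    (M : Type*) [AddCommGroup M] [Module R₀ M] [Module R M] [IsScalarTower R₀ R M]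
    (ℳ : ℕ → Submodule R₀ M) [DirectSum.Decomposition ℳ] [SetLike.GradedSMul 𝒜 ℳ]
    (N : ℕ) (S : Set M)
    (hShom : ∀ m ∈ S, ∃ j ≤ N, m ∈ ℳ j)
    (hSgen : Submodule.span R S = ⊤) :
    (∀ i : ℕ,
      (((HomogeneousIdeal.irrelevant 𝒜).toIdeal ^ i • (⊤ : Submodule R M) :
          Submodule R M) : Set M) ⊆ (gradeFilt R₀ ℳ i : Set M)) ∧
    (∀ n : ℕ, 1 ≤ n → ∃ i₀ : ℕ, ∀ i : ℕ, i₀ ≤ i →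
      (gradeFilt R₀ ℳ i : Set M) ⊆
        (((HomogeneousIdeal.irrelevant 𝒜).toIdeal ^ n • (⊤ : Submodule R M) :
          Submodule R M) : Set M)) ∧
    Set.BijOn (thetaMap R₀ 𝒜 ℳ)
      (filtCompletionSet R₀ (adicFilt R₀ M ((HomogeneousIdeal.irrelevant 𝒜).toIdeal))
        (adicFilt_antitone R₀ ((HomogeneousIdeal.irrelevant 𝒜).toIdeal)))
      (filtCompletionSet R₀ (gradeFilt R₀ ℳ) (gradeFilt_antitone R₀ ℳ)) := by
  have : IsNoetherianRing R := Algebra.FiniteType.isNoetherianRing R₀ R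
  obtain ⟨D, hD⟩ := exists_grade_le_irrelevant_pow 𝒜 (IsNoetherian.noetherian _)
  have hcofinal : ∀ n i, n * D + N ≤ i →
      gradeFilt R₀ ℳ i ≤ adicFilt R₀ M (HomogeneousIdeal.irrelevant 𝒜).toIdeal n :=
    fun n _ hi => gradeFilt_le_smul_top R₀ 𝒜 hShom hSgen (hD n) hi
  have hadic_le : ∀ i,
      adicFilt R₀ M (HomogeneousIdeal.irrelevant 𝒜).toIdeal i ≤ gradeFilt R₀ ℳ i :=
    fun i m hm => pow_irrelevant_smul_le_gradeFilt R₀ 𝒜 ℳ i m hm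
  exact ⟨fun i _ hx => hadic_le i hx,
    fun n _ => ⟨n * D + N, fun i hi _ hx => hcofinal n i hi hx⟩,
    bijOn_mapQ_filtCompletionSet _ hadic_le fun i => ⟨i * D + N, hcofinal i _ le_rfl⟩⟩

/-- **Proposition 4.1(iii) of the paper.**
Let `R₀` be a commutative Noetherian ring, `R = ⊕_j R_j` a commutative graded ring which is
a finitely generated graded `R₀`-algebra with degree-zero part `R₀`, and let
`I = ⊕_{j≥1} R_j` be the irrelevant ideal.  Let `M = ⊕_j M_j` be a graded `R`-module
generated by a set `S` of homogeneous elements of degrees bounded by `N`.  Then the `I`-adic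
filtration and the filtration by grading `M^i = ⊕_{j≥i} M_j` define the same topology on
`M`: one has `I^i·M ⊆ M^i` for all `i`, and for every `n ≥ 1` there is `i₀` with
`M^i ⊆ I^n·M` for all `i ≥ i₀`.  Consequently, the canonical map `θ_M` from the `I`-adic
completion of `M` to the graded completion `lim_i M/M^i` is an isomorphism (a bijection
between the two inverse limits). -/
theorem adic_and_grading_filtration_same_topology_and_theta_bijective
    (R₀ : Type*) [CommRing R₀] [IsNoetherianRing R₀]
    (R : Type*) [CommRing R] [Algebra R₀ R]
    (𝒜 : ℕ → Submodule R₀ R) [GradedAlgebra 𝒜]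
    (hfg : Algebra.FiniteType R₀ R) (h0 : 𝒜 0 = (1 : Submodule R₀ R))
    (M : Type*) [AddCommGroup M] [Module R₀ M] [Module R M] [IsScalarTower R₀ R M]
    (ℳ : ℕ → Submodule R₀ M) [DirectSum.Decomposition ℳ] [SetLike.GradedSMul 𝒜 ℳ]
    (N : ℕ) (S : Set M)
    (hShom : ∀ m ∈ S, ∃ j ≤ N, m ∈ ℳ j)
    (hSgen : Submodule.span R S = ⊤) :
    (∀ i : ℕ,
      (((HomogeneousIdeal.irrelevant 𝒜).toIdeal ^ i • (⊤ : Submodule R M) :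
          Submodule R M) : Set M) ⊆ (gradeFilt R₀ ℳ i : Set M)) ∧
    (∀ n : ℕ, 1 ≤ n → ∃ i₀ : ℕ, ∀ i : ℕ, i₀ ≤ i →
      (gradeFilt R₀ ℳ i : Set M) ⊆
        (((HomogeneousIdeal.irrelevant 𝒜).toIdeal ^ n • (⊤ : Submodule R M) :
          Submodule R M) : Set M)) ∧
    Set.BijOn (thetaMap R₀ 𝒜 ℳ)
      (filtCompletionSet R₀ (adicFilt R₀ M ((HomogeneousIdeal.irrelevant 𝒜).toIdeal))
        (adicFilt_antitone R₀ ((HomogeneousIdeal.irrelevant 𝒜).toIdeal)))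
      (filtCompletionSet R₀ (gradeFilt R₀ ℳ) (gradeFilt_antitone R₀ ℳ)) :=
  adic_and_grading_filtration_same_topology_and_theta_bijective_general R₀ R 𝒜 hfg M ℳ N S hShom
    hSgen
end

section
/- Let Φ : ⊕_{n∈ℕ} ℚ[[X]] → ∏_{j∈ℕ} (⊕_{n∈ℕ} ℚ) be the ℚ-linear map which sends a finitely supported family (f_n)_{n∈ℕ} of formal power series over ℚ to the family whose j-th entry is the (finitely supported) function n ↦ (coefficient of X^j in f_n). Then Φ is not surjective. -/
/-!
Every entry of `Φ f` is supported in the finite set `supp f`, so the entries of a family in the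
image of `Φ` have a common finite support. The diagonal family `j ↦ e_j` (with `e_j` the
`j`-th standard basis vector) has no such bound, hence is not in the image.
-/

namespace Finsupp

variable {ι M N : Type*} [Zero M] [Zero N]

theorem apply_mapRange_eq_zero_of_notMem_support (g : M → N) (hg : g 0 = 0) {f : ι →₀ M}
    {n : ι} (hn : n ∉ f.support) : f.mapRange g hg n = 0 :=
  notMem_support_iff.mp fun h => hn (support_mapRange h)

theorem not_surjective_mapRange_pi [Infinite ι] [Nontrivial N] (g : ι → M → N)
    (hg : ∀ j, g j 0 = 0) :
    ¬ Function.Surjective (fun (f : ι →₀ M) (j : ι) => f.mapRange (g j) (hg j)) := by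
  intro h
  obtain ⟨b, hb⟩ := exists_ne (0 : N)
  obtain ⟨f, hf⟩ := h fun j => single j b
  obtain ⟨n, hn⟩ := Infinite.exists_notMem_finset f.support
  have hdiag : f.mapRange (g n) (hg n) n = b := by
    simpa using DFunLike.congr_fun (congrFun hf n) n
  exact hb (hdiag.symm.trans (apply_mapRange_eq_zero_of_notMem_support _ _ hn))

end Finsupp

/-- **Proposition 4.1(v) of the paper.**
The canonical ℚ-linear map `Φ : ⊕_{n∈ℕ} ℚ[[X]] → ∏_{j∈ℕ} (⊕_{n∈ℕ} ℚ)`, sending a finitely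
supported family `(f_n)` of formal power series to the family whose `j`-th entry is the
(finitely supported) function `n ↦ coeff j (f_n)`, is not surjective. -/
theorem not_surjective_directSum_powerSeries_to_pi_directSum :
    ¬ Function.Surjective
      (fun (f : ℕ →₀ PowerSeries ℚ) (j : ℕ) =>
        Finsupp.mapRange (fun p => PowerSeries.coeff (R := ℚ) j p) (by simp) f) :=
  Finsupp.not_surjective_mapRange_pi (fun j p => PowerSeries.coeff j p) fun _ => map_zero _
end

section
/- Let R ⊆ S be an inclusion of commutative rings such that R is Noetherian and S is a finitely generated R-algebra. Let G be a finite group acting on S by R-algebra automorphisms. Then the ring of invariants S^G = {s ∈ S : σ(s) = s for all σ ∈ G} is a finitely generated R-algebra; in particular, S^G is Noetherian. -/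
/-!
Every `s ∈ S` is a root of the monic polynomial `∏_{g ∈ G} (X - g • s)`, whose coefficients are
`G`-invariant, so `S` is integral over `S^G`; being also of finite type over `S^G`, it is a
finite `S^G`-module. The Artin–Tate lemma, applied to the tower `R ⊆ S^G ⊆ S` over the Noetherian
ring `R`, then makes `S^G` of finite type over `R`, hence Noetherian by the Hilbert basis theorem.
-/

/-- The subalgebra of invariants of an action of a group `G` on a commutative `R`-algebra `S`
by `R`-algebra automorphisms, given by a group homomorphism `φ : G →* (S ≃ₐ[R] S)`. -/
def invariantSubalgebra (R S : Type*) [CommRing R] [CommRing S] [Algebra R S]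
    (G : Type*) [Group G] (φ : G →* (S ≃ₐ[R] S)) : Subalgebra R S where
  carrier := {x | ∀ g : G, φ g x = x}
  mul_mem' {a b} ha hb g := by rw [map_mul, ha g, hb g]
  add_mem' {a b} ha hb g := by rw [map_add, ha g, hb g]
  one_mem' g := map_one (φ g)
  zero_mem' g := map_zero (φ g)
  algebraMap_mem' r g := (φ g).commutes r

theorem Algebra.FiniteType.of_isIntegral_of_injective (A B C : Type*)
    [CommRing A] [CommRing B] [CommRing C] [Algebra A B] [Algebra B C] [Algebra A C]
    [IsScalarTower A B C] [IsNoetherianRing A] [Algebra.FiniteType A C]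
    [Algebra.IsIntegral B C] (hinj : Function.Injective (algebraMap B C)) :
    Algebra.FiniteType A B := by
  have : Algebra.FiniteType B C := .of_restrictScalars_finiteType A B C
  have : Module.Finite B C := Algebra.IsIntegral.finite
  exact ⟨fg_of_fg_of_fg A B C Algebra.FiniteType.out Module.Finite.fg_top hinj⟩

theorem invariantSubalgebra.isIntegral (R S : Type*) [CommRing R] [CommRing S] [Algebra R S]
    (G : Type*) [Group G] [Finite G] (φ : G →* (S ≃ₐ[R] S)) :
    Algebra.IsIntegral (invariantSubalgebra R S G φ) S :=
  letI := MulSemiringAction.compHom S φ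
  have : Algebra.IsInvariant (invariantSubalgebra R S G φ) S G := ⟨fun s hs ↦ ⟨⟨s, hs⟩, rfl⟩⟩
  Algebra.IsInvariant.isIntegral _ S G

/-- **Lemma 4.6 (lem:folklore1*) of the paper.**
Let `R ⊆ S` be an inclusion of commutative rings with `R` Noetherian and `S` a finitely
generated `R`-algebra, and let a finite group `G` act on `S` by `R`-algebra automorphisms.
Then the ring of invariants `S^G` is a finitely generated `R`-algebra; in particular,
`S^G` is Noetherian. -/
theorem invariantSubalgebra_finiteType_and_noetherian
    (R S : Type*) [CommRing R] [CommRing S] [Algebra R S]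
    [IsNoetherianRing R] (hS : Algebra.FiniteType R S)
    (G : Type*) [Group G] [Finite G] (φ : G →* (S ≃ₐ[R] S)) :
    Algebra.FiniteType R (invariantSubalgebra R S G φ) ∧
      IsNoetherianRing (invariantSubalgebra R S G φ) := by
  have := invariantSubalgebra.isIntegral R S G φ
  have : Algebra.FiniteType R (invariantSubalgebra R S G φ) :=
    .of_isIntegral_of_injective R _ S Subtype.val_injective
  exact ⟨this, Algebra.FiniteType.isNoetherianRing R _⟩
end

section
/- Let A be an associative unital (possibly noncommutative) ℚ-algebra and let A[t₁,…,tₙ] be the polynomial ring over A in n central, pairwise commuting variables. Let f₁,…,f_s be linear forms f_j = a_{j1}t₁ + ⋯ + a_{jn}tₙ with rational coefficients such that the coefficient vectors c(f₁),…,c(f_s) ∈ ℚⁿ are linearly independent over ℚ. For each j, let γ_j = Σ_{i=0}^{d_j} m_i^j · f_j^i, where the leading coefficient m_{d_j}^j is a nonzero rational number and all coefficients m_i^j lie in the center Z(A) of A. Then, as (two-sided) ideals in A[t₁,…,tₙ], one has (γ₁·γ₂⋯γ_s) = ⋂_{j=1}^{s} (γ_j). -/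
/-!
For `j ≠ k` choose `α ∈ ℚⁿ` with `c(f_j)·α = 1` and `c(f_k)·α = 0`, and substitute
`t ↦ t + X α` into `A[t][X]`; setting `X = 0` undoes the substitution. It fixes `γ_k`, and
turns `γ_j` into a rational unit times a polynomial that is monic in `X`. Division with remainder
by that monic polynomial shows `γ_j ∣ γ_k x → γ_j ∣ x`, because `γ_k` is central and
left-regular (the same substitution with `c(f_k)·α = 1` makes it monic up to a unit).
Since all `γ_j` are central, this coprimality gives `(γ₁⋯γ_s) = ⋂ (γ_j)` by induction on `s`.
-/

open Finset Polynomial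

namespace Polynomial

variable {S : Type*}

theorem C_mem_center [Semiring S] {c : S} (hc : c ∈ Set.center S) : C c ∈ Set.center S[X] :=
  Semigroup.mem_center_iff.2 fun p => by
    ext k
    rw [coeff_C_mul, coeff_mul_C, Semigroup.mem_center_iff.1 hc (p.coeff k)]

theorem X_mem_center [Semiring S] : (X : S[X]) ∈ Set.center S[X] :=
  Semigroup.mem_center_iff.2 fun p => (commute_X p).eq.symm

theorem isLeftRegular_C [Semiring S] {c : S} (hc : IsLeftRegular c) : IsLeftRegular (C c) :=
  fun p q h => ext fun k => hc <| by simpa only [coeff_C_mul] using congrArg (coeff · k) h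

theorem monic_sum_range_C_mul_X_pow [Semiring S] {c : ℕ → S} {d : ℕ} (hc : c d = 1) :
    (∑ i ∈ range (d + 1), C (c i) * X ^ i).Monic := by
  rw [sum_range_succ, hc, C_1, one_mul, add_comm]
  refine monic_X_pow_add (mem_degreeLT.1 <| Submodule.sum_mem _ fun i hi => mem_degreeLT.2 ?_)
  exact (degree_C_mul_X_pow_le i _).trans_lt (by exact_mod_cast mem_range.1 hi)

theorem exists_monic_sum_C_mul_X_add_C_pow [Semiring S] {c : ℕ → S} {d : ℕ} (hd : IsUnit (c d))
    (e : S) : ∃ g : S[X], g.Monic ∧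
      ∑ i ∈ range (d + 1), C (c i) * (X + C e) ^ i = C (c d) * g := by
  obtain ⟨u, hu⟩ := hd
  refine ⟨(∑ i ∈ range (d + 1), C (((u⁻¹ : Sˣ) : S) * c i) * X ^ i).comp (X + C e),
    (monic_sum_range_C_mul_X_pow (by rw [← hu, Units.inv_mul])).comp_X_add_C e, ?_⟩
  simp only [sum_comp, C_mul_comp, X_pow_comp, mul_sum, ← mul_assoc, ← C_mul, ← hu,
    Units.mul_inv, one_mul]

theorem Monic.dvd_of_dvd_C_mul [Ring S] {g y : S[X]} (hg : g.Monic) {c : S}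
    (hc : c ∈ Set.center S) (hreg : IsLeftRegular c) (h : g ∣ C c * y) : g ∣ y := by
  nontriviality S
  have hmod : (C c * y) %ₘ g = C c * (y %ₘ g) := by
    refine (div_modByMonic_unique (C c * (y /ₘ g)) _ hg ⟨?_, ?_⟩).2
    · rw [← mul_assoc, Semigroup.mem_center_iff.1 (C_mem_center hc) g, mul_assoc, ← mul_add,
        modByMonic_add_div]
    · calc degree (C c * (y %ₘ g)) ≤ degree (C c) + degree (y %ₘ g) := degree_mul_le _ _
        _ ≤ degree (y %ₘ g) := by simpa using add_le_add_left degree_C_le (degree (y %ₘ g))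
        _ < degree g := degree_modByMonic_lt y hg
  rw [← modByMonic_eq_zero_iff_dvd hg] at h ⊢
  exact isLeftRegular_C hreg (by rw [← hmod, h, mul_zero] : C c * (y %ₘ g) = C c * 0)

end Polynomial

theorem exists_dotProduct_eq_one_and_eq_zero {K σ : Type*} [Field K] [Fintype σ] {c c' : σ → K}
    (h : c ∉ K ∙ c') : ∃ α : σ → K, c ⬝ᵥ α = 1 ∧ c' ⬝ᵥ α = 0 := by
  classical
  obtain ⟨φ, hφc, hφc'⟩ := Submodule.exists_dual_map_eq_bot_of_notMem h inferInstance
  have hφ : ∀ v, v ⬝ᵥ (dotProductEquiv K σ).symm φ = φ v := fun v => by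
    rw [dotProduct_comm, ← dotProductEquiv_apply_apply, LinearEquiv.apply_symm_apply]
  refine ⟨(φ c)⁻¹ • (dotProductEquiv K σ).symm φ, ?_, ?_⟩
  · rw [dotProduct_smul, hφ, smul_eq_mul, inv_mul_cancel₀ hφc]
  · have : φ c' ∈ (⊥ : Submodule K K) :=
      hφc' ▸ Submodule.mem_map_of_mem (Submodule.mem_span_singleton_self c')
    rw [dotProduct_smul, hφ, (Submodule.mem_bot K).1 this, smul_zero]

theorem List.prod_map_dvd_iff_forall_dvd {M ι : Type*} [Monoid M] {γ : ι → M}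
    (hcen : ∀ j, γ j ∈ Set.center M)
    (hcop : _root_.Pairwise fun j k => ∀ x, γ j ∣ γ k * x → γ j ∣ x) {l : List ι} (hl : l.Nodup)
    (x : M) : (l.map γ).prod ∣ x ↔ ∀ j ∈ l, γ j ∣ x := by
  induction l generalizing x with
  | nil => simp
  | cons b l ih =>
    rw [List.nodup_cons] at hl
    rw [List.map_cons, List.prod_cons, List.forall_mem_cons]
    constructor
    · rintro ⟨y, rfl⟩
      refine ⟨(dvd_mul_right _ _).mul_right _, fun j hj => ?_⟩
      obtain ⟨z, hz⟩ := ((ih hl.2 _).1 dvd_rfl) j hj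
      refine ⟨γ b * z * y, ?_⟩
      rw [hz, ← mul_assoc, Semigroup.mem_center_iff.1 (hcen j)]
      simp only [mul_assoc]
    · rintro ⟨⟨y, rfl⟩, hl'⟩
      exact mul_dvd_mul_left _ ((ih hl.2 y).2 fun j hj =>
        hcop (ne_of_mem_of_not_mem hj hl.1) y (hl' j hj))

namespace AddMonoidAlgebra

variable {A T : Type*} [Semiring A] [Semiring T] {σ : Type*}

theorem single_mem_center {G : Type*} [AddCommMonoid G] {b : A} (hb : b ∈ Set.center A) (v : G) :
    single v b ∈ Set.center (AddMonoidAlgebra A G) := by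
  refine Semigroup.mem_center_iff.2 fun x => ?_
  induction x using AddMonoidAlgebra.induction_linear with
  | zero => rw [zero_mul, mul_zero]
  | add x y hx hy => rw [add_mul, mul_add, hx, hy]
  | single w a => rw [single_mul_single, single_mul_single, add_comm,
      Semigroup.mem_center_iff.1 hb a]

theorem ringHom_ext_of_single_single {φ ψ : AddMonoidAlgebra A (σ →₀ ℕ) →+* T}
    (h₀ : ∀ b, φ (single 0 b) = ψ (single 0 b))
    (h₁ : ∀ i, φ (single (Finsupp.single i 1) 1) = ψ (single (Finsupp.single i 1) 1)) :
    φ = ψ := by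
  refine ringHom_ext h₀ fun v => ?_
  induction v using Finsupp.induction_linear with
  | zero => exact h₀ 1
  | add u v hu hv => rw [← mul_one (1 : A), ← single_mul_single, map_mul, map_mul, hu, hv]
  | single i k =>
    have hpow : single (Finsupp.single i k) (1 : A) = single (Finsupp.single i 1) 1 ^ k := by
      rw [single_pow, one_pow, Finsupp.smul_single, smul_eq_mul, mul_one]
    rw [hpow, map_pow, map_pow, h₁]

noncomputable def evalCentral (f : A →+* T) (w : σ → Submonoid.center T) :
    AddMonoidAlgebra A (σ →₀ ℕ) →+* T :=
  liftNCRingHom f ((Submonoid.center T).subtype.comp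
      { toFun := fun v => v.toAdd.prod fun i k => w i ^ k
        map_one' := Finsupp.prod_zero_index
        map_mul' := fun _ _ => Finsupp.prod_add_index' (fun _ => pow_zero _)
          fun _ _ _ => pow_add _ _ _ })
    fun b v => ((v.toAdd.prod fun i k => w i ^ k).2.comm (f b)).symm

variable (f : A →+* T) (w : σ → Submonoid.center T)

theorem evalCentral_single_zero (b : A) : evalCentral f w (single 0 b) = f b := by
  refine (liftNCRingHom_single _ _ _ _ _).trans ?_
  simp

theorem evalCentral_single_single (i : σ) (b : A) :
    evalCentral f w (single (Finsupp.single i 1) b) = f b * w i := by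
  refine (liftNCRingHom_single _ _ _ _ _).trans ?_
  simp

variable {K : Type*} [CommSemiring K] [Algebra K A]

/-- The substitution `t ↦ t + X • α` of the variables. -/
noncomputable def shiftAlong (α : σ → K) :
    AddMonoidAlgebra A (σ →₀ ℕ) →+* (AddMonoidAlgebra A (σ →₀ ℕ))[X] :=
  evalCentral (C.comp singleZeroRingHom) fun i =>
    ⟨C (single (Finsupp.single i 1) 1) + α i • X, show _ ∈ Subalgebra.center K _ from
      add_mem (C_mem_center (single_mem_center Set.one_mem_center _))
        (Subalgebra.smul_mem _ X_mem_center _)⟩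

variable (α : σ → K)

theorem shiftAlong_single_zero (b : A) : shiftAlong α (single 0 b) = C (single 0 b) :=
  evalCentral_single_zero _ _ b

theorem shiftAlong_single_single (i : σ) (b : A) :
    shiftAlong α (single (Finsupp.single i 1) b) =
      C (single (Finsupp.single i 1) b) + α i • (C (single 0 b) * X) := by
  refine (evalCentral_single_single _ _ i b).trans ?_
  change C (single 0 b) * (C (single (Finsupp.single i 1) 1) + α i • X) = _
  rw [mul_add, ← C_mul, single_mul_single, zero_add, mul_one, mul_smul_comm]

theorem constantCoeff_shiftAlong (x : AddMonoidAlgebra A (σ →₀ ℕ)) :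
    constantCoeff (shiftAlong α x) = x := by
  refine RingHom.congr_fun (ringHom_ext_of_single_single (φ := constantCoeff.comp (shiftAlong α))
    (ψ := RingHom.id _) (fun b => ?_) fun i => ?_) x
  · simp [shiftAlong_single_zero]
  · simp [shiftAlong_single_single]

theorem shiftAlong_injective : Function.Injective (shiftAlong (A := A) α) :=
  Function.LeftInverse.injective (constantCoeff_shiftAlong α)

variable [Fintype σ]

variable (A) in
noncomputable def linearForm (c : σ → K) : AddMonoidAlgebra A (σ →₀ ℕ) :=
  ∑ i, single (Finsupp.single i 1) (algebraMap K A (c i))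

theorem linearForm_mem_center (c : σ → K) : linearForm A c ∈ Set.center _ :=
  show _ ∈ Subsemiring.center _ from
    sum_mem fun i _ => single_mem_center (Set.algebraMap_mem_center (c i)) _

theorem shiftAlong_linearForm (c : σ → K) :
    shiftAlong α (linearForm A c) = C (linearForm A c) + (c ⬝ᵥ α) • X := by
  simp only [linearForm, map_sum, shiftAlong_single_single, sum_add_distrib, dotProduct, sum_smul]
  congr 1
  refine sum_congr rfl fun i _ => ?_
  rw [show C (single (0 : σ →₀ ℕ) (algebraMap K A (c i))) = algebraMap K _ (c i) from rfl,
    ← Algebra.smul_def, smul_smul, mul_comm]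

noncomputable def sumMulPow {G : Type*} [AddMonoid G] (m : ℕ → A) (d : ℕ)
    (f : AddMonoidAlgebra A G) : AddMonoidAlgebra A G :=
  ∑ i ∈ range (d + 1), single 0 (m i) * f ^ i

theorem sumMulPow_mem_center {G : Type*} [AddCommMonoid G] {m : ℕ → A} {d : ℕ}
    (hm : ∀ i ≤ d, m i ∈ Set.center A) {f : AddMonoidAlgebra A G} (hf : f ∈ Set.center _) :
    sumMulPow m d f ∈ Set.center _ :=
  show _ ∈ Subsemiring.center _ from sum_mem fun i hi =>
    mul_mem (single_mem_center (hm i (Nat.lt_succ_iff.1 (mem_range.1 hi))) 0) (pow_mem hf i)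

omit [Fintype σ] in
theorem shiftAlong_sumMulPow (m : ℕ → A) (d : ℕ) (f : AddMonoidAlgebra A (σ →₀ ℕ)) :
    shiftAlong α (sumMulPow m d f) =
      ∑ i ∈ range (d + 1), C (single 0 (m i)) * shiftAlong α f ^ i := by
  simp only [sumMulPow, map_sum, map_mul, map_pow, shiftAlong_single_zero]

theorem shiftAlong_sumMulPow_of_dotProduct_eq_zero {c : σ → K} (hc : c ⬝ᵥ α = 0) (m : ℕ → A)
    (d : ℕ) :
    shiftAlong α (sumMulPow m d (linearForm A c)) = C (sumMulPow m d (linearForm A c)) := by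
  rw [shiftAlong_sumMulPow, shiftAlong_linearForm, hc, zero_smul, add_zero, sumMulPow, map_sum]
  simp only [map_mul, map_pow]

theorem exists_monic_shiftAlong_sumMulPow {c : σ → K} (hc : c ⬝ᵥ α = 1) {m : ℕ → A} {d : ℕ}
    (hd : IsUnit (m d)) : ∃ g : (AddMonoidAlgebra A (σ →₀ ℕ))[X], g.Monic ∧
      shiftAlong α (sumMulPow m d (linearForm A c)) = C (single 0 (m d)) * g := by
  rw [shiftAlong_sumMulPow, shiftAlong_linearForm, hc, one_smul, add_comm (C _)]
  exact exists_monic_sum_C_mul_X_add_C_pow (hd.map singleZeroRingHom) _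

section Field

variable {A K σ : Type*} [Ring A] [Field K] [Algebra K A] [Fintype σ]

theorem isLeftRegular_sumMulPow {c : σ → K} (hc : c ≠ 0) {m : ℕ → A} {d : ℕ}
    (hd : IsUnit (m d)) : IsLeftRegular (sumMulPow m d (linearForm A c)) := by
  obtain ⟨α, hα, -⟩ := exists_dotProduct_eq_one_and_eq_zero (c := c) (c' := 0)
    (by rwa [Submodule.span_singleton_eq_bot.2 rfl, Submodule.mem_bot])
  obtain ⟨g, hg, hγ⟩ := exists_monic_shiftAlong_sumMulPow α hα hd
  have hu : IsUnit (C (single (0 : σ →₀ ℕ) (m d))) := (hd.map singleZeroRingHom).map C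
  have hreg : IsLeftRegular (C (single (0 : σ →₀ ℕ) (m d)) * g) :=
    hu.isRegular.left.mul hg.isRegular.left
  intro x y hxy
  refine shiftAlong_injective α (hreg ?_)
  simpa only [map_mul, hγ] using congrArg (shiftAlong α) hxy

theorem sumMulPow_dvd_of_dvd_mul {c c' : σ → K} (hcc' : c ∉ K ∙ c') (hc' : c' ≠ 0)
    {m m' : ℕ → A} {d d' : ℕ} (hmd : m d ∈ Set.center A) (hd : IsUnit (m d))
    (hm' : ∀ i ≤ d', m' i ∈ Set.center A) (hd' : IsUnit (m' d'))
    {x : AddMonoidAlgebra A (σ →₀ ℕ)}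
    (h : sumMulPow m d (linearForm A c) ∣ sumMulPow m' d' (linearForm A c') * x) :
    sumMulPow m d (linearForm A c) ∣ x := by
  obtain ⟨α, hα, hα'⟩ := exists_dotProduct_eq_one_and_eq_zero hcc'
  obtain ⟨g, hg, hγ⟩ := exists_monic_shiftAlong_sumMulPow α hα hd
  have hu : single (0 : σ →₀ ℕ) (m d) ∈ Set.center _ := single_mem_center hmd 0
  obtain ⟨z, hz⟩ : g ∣ shiftAlong α x := by
    refine hg.dvd_of_dvd_C_mul (sumMulPow_mem_center hm' (linearForm_mem_center c'))
      (isLeftRegular_sumMulPow hc' hd') ?_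
    obtain ⟨y, hy⟩ := h
    refine ⟨C (single 0 (m d)) * shiftAlong α y, ?_⟩
    rw [← shiftAlong_sumMulPow_of_dotProduct_eq_zero α hα', ← map_mul, hy, map_mul, hγ,
      ← Semigroup.mem_center_iff.1 (C_mem_center hu) g, mul_assoc]
  have hx := congrArg constantCoeff hz
  have hγ₀ := congrArg constantCoeff hγ
  rw [constantCoeff_shiftAlong, map_mul] at hx hγ₀
  have hC : constantCoeff (C (single (0 : σ →₀ ℕ) (m d))) = single 0 (m d) := coeff_C_zero
  have hud : IsUnit (single (0 : σ →₀ ℕ) (m d)) := hd.map singleZeroRingHom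
  rw [hγ₀, hC, ← Semigroup.mem_center_iff.1 hu, hud.mul_right_dvd, hx]
  exact dvd_mul_right _ _

end Field

end AddMonoidAlgebra

open AddMonoidAlgebra

/-- **Lemma 6.3 (lem:elem1) of the paper.**
Let `A` be an associative unital (possibly noncommutative) ℚ-algebra and let
`A[t₁,…,tₙ]` be the polynomial ring over `A` in `n` central, pairwise commuting variables
(realized as `AddMonoidAlgebra A (Fin n →₀ ℕ)`).  Let `f₁,…,f_s` be linear forms with
rational coefficients whose coefficient vectors are linearly independent over ℚ, and for
each `j` let `γ_j = Σ_{i=0}^{d_j} m_i^j·f_j^i` with all `m_i^j` in the center of `A` and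
the leading coefficient `m_{d_j}^j` a nonzero rational.  Then, as ideals of
`A[t₁,…,tₙ]`, one has `(γ₁⋯γ_s) = ⋂_j (γ_j)`. -/
theorem ideal_prod_eq_iInter_of_indep_linear_forms
    (A : Type*) [Ring A] [Algebra ℚ A] (n s : ℕ)
    (a : Fin s → Fin n → ℚ) (hindep : LinearIndependent ℚ a)
    (d : Fin s → ℕ) (m : Fin s → ℕ → A)
    (hm : ∀ j, ∀ i ≤ d j, m j i ∈ Set.center A)
    (hlead : ∀ j, ∃ q : ℚ, q ≠ 0 ∧ m j (d j) = algebraMap ℚ A q)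
    (f : Fin s → AddMonoidAlgebra A (Fin n →₀ ℕ))
    (hf : ∀ j, f j = ∑ i : Fin n,
      AddMonoidAlgebra.single (Finsupp.single i 1) (algebraMap ℚ A (a j i)))
    (γ : Fin s → AddMonoidAlgebra A (Fin n →₀ ℕ))
    (hγ : ∀ j, γ j = ∑ i ∈ Finset.range (d j + 1),
      AddMonoidAlgebra.single 0 (m j i) * (f j) ^ i) :
    Set.range (fun q : AddMonoidAlgebra A (Fin n →₀ ℕ) => (List.ofFn γ).prod * q) =
      ⋂ j : Fin s, Set.range (fun q : AddMonoidAlgebra A (Fin n →₀ ℕ) => γ j * q) := by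
  have hγ' : ∀ j, γ j = sumMulPow (m j) (d j) (linearForm A (a j)) :=
    fun j => by rw [hγ j, hf j]; rfl
  have hunit : ∀ j, IsUnit (m j (d j)) := fun j => by
    obtain ⟨q, hq, hmq⟩ := hlead j
    exact hmq ▸ (Ne.isUnit hq).map (algebraMap ℚ A)
  have hcen : ∀ j, γ j ∈ Set.center _ := fun j =>
    hγ' j ▸ sumMulPow_mem_center (hm j) (linearForm_mem_center _)
  have hcop : Pairwise fun j k => ∀ x, γ j ∣ γ k * x → γ j ∣ x := fun j k hjk x => by
    rw [hγ' j, hγ' k]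
    refine sumMulPow_dvd_of_dvd_mul ?_ (hindep.ne_zero k) (hm j _ le_rfl) (hunit j) (hm k)
      (hunit k)
    simpa using hindep.notMem_span_image (s := {k}) (x := j) (by simpa using hjk)
  ext x
  simp only [Set.mem_range, Set.mem_iInter, List.ofFn_eq_map]
  simpa only [dvd_def, List.mem_finRange, true_implies, @eq_comm _ x] using
    List.prod_map_dvd_iff_forall_dvd hcen hcop (List.nodup_finRange s) x
end
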